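/- Let (sₖ)_{k≥1} be positive integers, m₀ = b, m₁ = b^{s₁-1}a, m_{k+1} = m_k^{s_{k+1}} m_{k-1}. For every k ≥ 1 and every t with 1 ≤ t ≤ s_{k+1}, the word (m_k^t m_{k-1})' (the word m_k^t m_{k-1} with its last two letters removed) is a palindrome. -/

import Mathlib

/-!
Write `(u, v) = (m_{k-1}, m_k)`. The pair satisfies `vu = r x y` and `uv = r y x` for a palindrome
`r` and letters `x, y`, where moreover `r` conjugates `u` and `v` to their reversals
(`r uᴿ = u r`, `r vᴿ = v r`). This invariant passes from `(u, v)` to `(v, vⁿ u)` with `r` replaced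
by `vⁿ r` and `x, y` swapped. Then `(vᵗ u)' = vᵗ⁻¹ r`, whose reversal is `r (vᵗ⁻¹)ᴿ = vᵗ⁻¹ r`.
-/

/-- `w.drop2` is the word `w` deprived of its last two letters. -/
def drop2 {A : Type*} (w : List A) : List A := w.dropLast.dropLast

/-- `wordPow w t` is the `t`-fold concatenation `w^t`. -/
def wordPow {A : Type*} (w : List A) (t : ℕ) : List A := (List.replicate t w).flatten

section

variable {A : Type*}

theorem wordPow_succ (w : List A) (t : ℕ) : wordPow w (t + 1) = w ++ wordPow w t := by
  simp [wordPow, List.replicate_succ]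

theorem wordPow_succ' (w : List A) (t : ℕ) : wordPow w (t + 1) = wordPow w t ++ w := by
  simp [wordPow, List.replicate_succ']

theorem append_wordPow_comm (w : List A) (t : ℕ) : w ++ wordPow w t = wordPow w t ++ w := by
  rw [← wordPow_succ, wordPow_succ']

theorem drop2_append_pair (u : List A) (x y : A) : drop2 (u ++ [x, y]) = u := by
  rw [drop2, show u ++ [x, y] = u ++ [x] ++ [y] by simp, List.dropLast_concat,
    List.dropLast_concat]

theorem append_reverse_wordPow {r w : List A} (h : r ++ w.reverse = w ++ r) (t : ℕ) :
    r ++ (wordPow w t).reverse = wordPow w t ++ r := by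
  induction t with
  | zero => simp [wordPow]
  | succ n ih =>
    rw [wordPow_succ, List.reverse_append, ← List.append_assoc, ih, List.append_assoc, h,
      ← List.append_assoc, append_wordPow_comm]

def IsCentralPair (u v : List A) : Prop :=
  ∃ r : List A, ∃ x y : A, r.reverse = r ∧ v ++ u = r ++ [x, y] ∧ u ++ v = r ++ [y, x] ∧
    r ++ u.reverse = u ++ r ∧ r ++ v.reverse = v ++ r

theorem isCentralPair_singleton_replicate (a b : A) (n : ℕ) :
    IsCentralPair [b] (List.replicate n b ++ [a]) := by
  have hb : b :: List.replicate n b = List.replicate n b ++ [b] := by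
    rw [← List.replicate_succ, List.replicate_succ']
  refine ⟨List.replicate n b, a, b, List.reverse_replicate, by simp, ?_, ?_, by simp⟩
  · rw [List.singleton_append, ← List.cons_append, hb, List.append_assoc]
    rfl
  · rw [List.reverse_singleton, ← hb]
    rfl

theorem IsCentralPair.wordPow_append {u v : List A} (h : IsCentralPair u v) (n : ℕ) :
    IsCentralPair v (wordPow v n ++ u) := by
  obtain ⟨r, x, y, hr, hvu, huv, hu, hv⟩ := h
  have hW : r ++ (wordPow v n).reverse = wordPow v n ++ r := append_reverse_wordPow hv n
  refine ⟨wordPow v n ++ r, y, x, ?_, ?_, ?_, ?_, ?_⟩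
  · rw [List.reverse_append, hr, hW]
  · rw [List.append_assoc, huv, List.append_assoc]
  · rw [← List.append_assoc, append_wordPow_comm, List.append_assoc, hvu, List.append_assoc]
  · rw [List.append_assoc, hv, ← List.append_assoc, ← append_wordPow_comm, List.append_assoc]
  · rw [List.reverse_append, List.append_assoc, ← List.append_assoc r, hu, List.append_assoc, hW]
    simp only [List.append_assoc]

theorem IsCentralPair.reverse_drop2_wordPow_append {u v : List A} (h : IsCentralPair u v)
    {t : ℕ} (ht : 1 ≤ t) :
    (drop2 (wordPow v t ++ u)).reverse = drop2 (wordPow v t ++ u) := by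
  obtain ⟨r, x, y, hr, hvu, -, -, hv⟩ := h
  obtain ⟨n, rfl⟩ : ∃ n, t = n + 1 := ⟨t - 1, by omega⟩
  rw [wordPow_succ', List.append_assoc, hvu, ← List.append_assoc, drop2_append_pair,
    List.reverse_append, hr, append_reverse_wordPow hv]

end

theorem stmt10_general {A : Type*} (a b : A) (s : ℕ → ℕ)
    (m : ℕ → List A) (hm0 : m 0 = [b])
    (hm1 : m 1 = List.replicate (s 1 - 1) b ++ [a])
    (hmr : ∀ k : ℕ, 1 ≤ k → m (k + 1) = wordPow (m k) (s (k + 1)) ++ m (k - 1)) :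
    ∀ k : ℕ, 1 ≤ k → ∀ t : ℕ, 1 ≤ t → t ≤ s (k + 1) →
      (drop2 (wordPow (m k) t ++ m (k - 1))).reverse =
        drop2 (wordPow (m k) t ++ m (k - 1)) := by
  have hcentral : ∀ k, 1 ≤ k → IsCentralPair (m (k - 1)) (m k) := by
    intro k hk
    induction k, hk using Nat.le_induction with
    | base => rw [hm0, hm1]; exact isCentralPair_singleton_replicate a b _
    | succ k hk ih => rw [hmr k hk, Nat.add_sub_cancel]; exact ih.wordPow_append _
  intro k hk t ht _
  exact (hcentral k hk).reverse_drop2_wordPow_append ht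

/-- Lemma 5.3 (palindrome part): for every `k ≥ 1` and `1 ≤ t ≤ s_{k+1}`, the
word `(m_k^t m_{k-1})'` (with its last two letters removed) is a palindrome. -/
theorem stmt10 {A : Type*} (a b : A) (hab : a ≠ b) (s : ℕ → ℕ) (hs : ∀ k, 1 ≤ s k)
    (m : ℕ → List A) (hm0 : m 0 = [b])
    (hm1 : m 1 = List.replicate (s 1 - 1) b ++ [a])
    (hmr : ∀ k : ℕ, 1 ≤ k → m (k + 1) = wordPow (m k) (s (k + 1)) ++ m (k - 1)) :
    ∀ k : ℕ, 1 ≤ k → ∀ t : ℕ, 1 ≤ t → t ≤ s (k + 1) →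
      (drop2 (wordPow (m k) t ++ m (k - 1))).reverse =
        drop2 (wordPow (m k) t ++ m (k - 1)) :=
  stmt10_general a b s m hm0 hm1 hmr
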